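/- arXiv:2410.17508 — 3 statements merged into one kernel-verified Lean document; each statement's English description precedes it below -/
import Mathlib

section
/- Let A1, A2 be 2-matchings in a graph G, let P be a partition of A1 △ A2 into alternating trails with respect to (A1, A2) having the minimum number of trails among all such partitions, let P be a trail in this partition, and let v be a vertex with d_{A1∩P}(v) > d_{A2∩P}(v). Then for every other trail P' in the partition, d_{A1∩P'}(v) ≥ d_{A2∩P'}(v). -/
open Finset

variable {V : Type*} [DecidableEq V]

/-- Degree of `v` in the edge set `F`; self-loops count twice. -/
def degE (F : Finset (Sym2 V)) (v : V) : ℕ :=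
  ∑ e ∈ F, (if e = s(v, v) then 2 else if v ∈ e then 1 else 0)

/-- `M` is a 2-matching in the graph with edge set `E`. -/
def IsTwoMatching (E M : Finset (Sym2 V)) : Prop :=
  M ⊆ E ∧ ∀ v : V, degE M v ≤ 2

/-- An edge set forming a cycle of length 3. -/
def IsTriangle (T : Finset (Sym2 V)) : Prop :=
  ∃ a b c : V, a ≠ b ∧ b ≠ c ∧ a ≠ c ∧ T = {s(a, b), s(b, c), s(c, a)}

def TriangleFree (M : Finset (Sym2 V)) : Prop :=
  ∀ T : Finset (Sym2 V), IsTriangle T → ¬ T ⊆ M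

/-- `𝒯`-freeness: `M` contains no triangle of the list `𝒯`. -/
def TFree (𝒯 : Set (Finset (Sym2 V))) (M : Finset (Sym2 V)) : Prop :=
  ∀ T ∈ 𝒯, ¬ T ⊆ M

/-- Symmetric difference of edge sets. -/
def symmDiffE (A B : Finset (Sym2 V)) : Finset (Sym2 V) := (A \ B) ∪ (B \ A)

/-- The list of consecutive edges of the vertex sequence `vs`. -/
def trailEdges (vs : List V) : List (Sym2 V) :=
  List.zipWith (fun a b => s(a, b)) vs vs.tail

/-- The edge set of the vertex sequence `vs`. -/
def edgesOf (vs : List V) : Finset (Sym2 V) := (trailEdges vs).toFinset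

/-- `vs` is a trail (a sequence of distinct consecutive edges) in edge set `E`. -/
def IsTrailIn (E : Finset (Sym2 V)) (vs : List V) : Prop :=
  (trailEdges vs).Nodup ∧ ∀ e ∈ trailEdges vs, e ∈ E

/-- `vs` is a trail alternately traversing edges of `A1 \ A2` and `A2 \ A1`. -/
def IsAltTrail (A1 A2 : Finset (Sym2 V)) (vs : List V) : Prop :=
  (trailEdges vs).Nodup ∧
  (∀ e ∈ trailEdges vs, (e ∈ A1 ∧ e ∉ A2) ∨ (e ∈ A2 ∧ e ∉ A1)) ∧
  (trailEdges vs).Chain' (fun e f => e ∈ A1 ↔ f ∈ A2)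

/-- `Ps` is a partition of `A1 △ A2` into (nonempty) alternating trails w.r.t. `(A1, A2)`. -/
def IsAltTrailPartition (A1 A2 : Finset (Sym2 V)) (Ps : Finset (List V)) : Prop :=
  (∀ p ∈ Ps, IsAltTrail A1 A2 p ∧ trailEdges p ≠ []) ∧
  (∀ p ∈ Ps, ∀ q ∈ Ps, p ≠ q → Disjoint (edgesOf p) (edgesOf q)) ∧
  Ps.biUnion edgesOf = symmDiffE A1 A2

/-!
Along an alternating trail, every passage through `v` uses one edge of `A1 \ A2` and one of
`A2 \ A1`, so `d_{A1∩P}(v) - d_{A2∩P}(v)` only counts the ends of `P` lying at `v`, each with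
the sign of its end edge. Hence if `P` has an `A1`-surplus at `v`, it can be oriented to start at
`v` with an `A1`-edge, and if another trail `P'` has an `A2`-surplus at `v`, it starts at `v` with
an `A2`-edge after reorientation. Traversing `P` backwards and then `P'` is a single alternating
trail, and replacing `P` and `P'` by it contradicts the minimality of the partition.
-/

section Lists

variable {α : Type*}

theorem trailEdges_cons_cons (a b : α) (l : List α) :
    trailEdges (a :: b :: l) = s(a, b) :: trailEdges (b :: l) := rfl

theorem trailEdges_append_cons (xs : List α) (v : α) (ys : List α) :
    trailEdges (xs ++ v :: ys) = trailEdges (xs ++ [v]) ++ trailEdges (v :: ys) := by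
  induction xs with
  | nil => rfl
  | cons x xs ih =>
    cases xs with
    | nil => rfl
    | cons y xs =>
      simp only [List.cons_append, trailEdges_cons_cons] at ih ⊢
      rw [ih]

theorem trailEdges_reverse (l : List α) : trailEdges l.reverse = (trailEdges l).reverse := by
  induction l with
  | nil => rfl
  | cons x l ih =>
    cases l with
    | nil => rfl
    | cons y l =>
      rw [List.reverse_cons, List.reverse_cons, List.append_assoc, List.singleton_append,
        trailEdges_append_cons, ← List.reverse_cons, ih, trailEdges_cons_cons,
        trailEdges_cons_cons x, List.reverse_cons, Sym2.eq_swap (a := y)]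
      rfl

theorem trailEdges_reverse_append (xs : List α) (v : α) (ys : List α) :
    trailEdges (xs.reverse ++ v :: ys) =
      (trailEdges (v :: xs)).reverse ++ trailEdges (v :: ys) := by
  rw [trailEdges_append_cons, ← List.reverse_cons, trailEdges_reverse]

end Lists

section AltTrail

variable {α : Type*} {A1 A2 : Finset (Sym2 α)}

theorem IsAltTrail.swap {l : List α} (h : IsAltTrail A1 A2 l) : IsAltTrail A2 A1 l := by
  obtain ⟨hnd, hmem, hch⟩ := h
  refine ⟨hnd, fun e he => (hmem e he).symm, hch.imp_of_mem_imp fun e f he hf hef => ?_⟩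
  have := hmem e he
  have := hmem f hf
  tauto

theorem IsAltTrail.reverse {l : List α} (h : IsAltTrail A1 A2 l) :
    IsAltTrail A1 A2 l.reverse := by
  refine ⟨?_, ?_, ?_⟩ <;> rw [trailEdges_reverse]
  · exact List.nodup_reverse.2 h.1
  · exact fun e he => h.2.1 e (List.mem_reverse.1 he)
  · exact List.isChain_reverse.2 (h.swap.2.2.imp fun _ _ hef => hef.symm)

theorem IsAltTrail.of_cons {a : α} {l : List α} (h : IsAltTrail A1 A2 (a :: l)) :
    IsAltTrail A1 A2 l := by
  match l, h with
  | [], _ => exact ⟨List.nodup_nil, by simp [trailEdges], List.isChain_nil⟩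
  | b :: l, ⟨hnd, hmem, hch⟩ =>
    rw [trailEdges_cons_cons] at hnd hmem hch
    exact ⟨hnd.of_cons, fun e he => hmem e (List.mem_cons_of_mem _ he), hch.tail⟩

end AltTrail

section Degrees

variable {A1 A2 : Finset (Sym2 V)} {v : V}

def edgeDeg (v : V) (e : Sym2 V) : ℕ := if e = s(v, v) then 2 else if v ∈ e then 1 else 0

theorem edgeDeg_mk (v a b : V) :
    (edgeDeg v s(a, b) : ℤ) = (if a = v then 1 else 0) + (if b = v then 1 else 0) := by
  unfold edgeDeg
  by_cases ha : a = v <;> by_cases hb : b = v <;> subst_vars <;>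
    simp [Ne.symm, *]

def altSign (A : Finset (Sym2 V)) (e : Sym2 V) : ℤ := if e ∈ A then 1 else -1

theorem degE_inter_sub_degE_inter {F : Finset (Sym2 V)}
    (hF : ∀ e ∈ F, (e ∈ A1 ∧ e ∉ A2) ∨ (e ∈ A2 ∧ e ∉ A1)) :
    (degE (A1 ∩ F) v : ℤ) - degE (A2 ∩ F) v = ∑ e ∈ F, altSign A1 e * edgeDeg v e := by
  have hdeg (A : Finset (Sym2 V)) :
      degE (A ∩ F) v = ∑ e ∈ F, if e ∈ A then edgeDeg v e else 0 := by
    rw [degE, Finset.inter_comm, ← Finset.filter_mem_eq_inter, Finset.sum_filter]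
    rfl
  rw [hdeg, hdeg]
  push_cast
  rw [← Finset.sum_sub_distrib]
  refine Finset.sum_congr rfl fun e he => ?_
  rcases hF e he with ⟨h1, h2⟩ | ⟨h1, h2⟩ <;> simp [altSign, h1, h2]

/-- The signed contribution of the first vertex of a trail to `d_{A1}(v) - d_{A2}(v)`. -/
def headExcess (A : Finset (Sym2 V)) (v : V) : List V → ℤ
  | a :: b :: _ => if a = v then altSign A s(a, b) else 0
  | _ => 0

theorem exists_eq_cons_cons_of_headExcess_pos {A : Finset (Sym2 V)} {l : List V}
    (h : 0 < headExcess A v l) : ∃ b t, l = v :: b :: t ∧ s(v, b) ∈ A := by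
  match l with
  | [] | [_] => simp [headExcess] at h
  | a :: b :: t =>
    simp only [headExcess, altSign] at h
    split_ifs at h with ha hab <;> first | omega | exact ⟨b, t, ha ▸ rfl, ha ▸ hab⟩

theorem headExcess_append_singleton {A : Finset (Sym2 V)} (a : V) :
    ∀ {l : List V}, 2 ≤ l.length → headExcess A v (l ++ [a]) = headExcess A v l
  | [], h | [_], h => by simp at h
  | _ :: _ :: _, _ => rfl

theorem altSign_eq_neg_of_isAltTrail {a b c : V} {l : List V}
    (h : IsAltTrail A1 A2 (a :: b :: c :: l)) : altSign A1 s(b, c) = -altSign A1 s(a, b) := by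
  have hab := h.2.1 s(a, b) (by simp [trailEdges_cons_cons])
  have hbc := h.2.1 s(b, c) (by simp [trailEdges_cons_cons])
  have hchain := (List.isChain_cons_cons.1 h.2.2).1
  unfold altSign
  split_ifs <;> simp_all

theorem IsAltTrail.sum_altSign_mul_edgeDeg :
    ∀ {l : List V}, IsAltTrail A1 A2 l →
      ((trailEdges l).map fun e => altSign A1 e * edgeDeg v e).sum
        = headExcess A1 v l + headExcess A1 v l.reverse
  | [], _ | [_], _ => rfl
  | [a, b], _ => by
    simp [trailEdges, headExcess, edgeDeg_mk, Sym2.eq_swap (a := b)]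
    split_ifs <;> ring
  | a :: b :: c :: l, h => by
    have ih := IsAltTrail.sum_altSign_mul_edgeDeg h.of_cons
    have hrev : headExcess A1 v (a :: b :: c :: l).reverse
        = headExcess A1 v (b :: c :: l).reverse := by
      rw [List.reverse_cons (a := a)]
      exact headExcess_append_singleton a (by simp)
    rw [trailEdges_cons_cons, List.map_cons, List.sum_cons, ih, hrev]
    simp only [headExcess, altSign_eq_neg_of_isAltTrail h, edgeDeg_mk]
    split_ifs <;> ring

theorem IsAltTrail.exists_start_of_degE_lt {l : List V} (h : IsAltTrail A1 A2 l)
    (hv : degE (A2 ∩ edgesOf l) v < degE (A1 ∩ edgesOf l) v) :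
    ∃ b t, IsAltTrail A1 A2 (v :: b :: t) ∧ edgesOf (v :: b :: t) = edgesOf l ∧
      s(v, b) ∈ A1 := by
  have hsum : (degE (A1 ∩ edgesOf l) v : ℤ) - degE (A2 ∩ edgesOf l) v
      = headExcess A1 v l + headExcess A1 v l.reverse := by
    rw [degE_inter_sub_degE_inter (F := edgesOf l) fun e he => h.2.1 e (List.mem_toFinset.1 he),
      edgesOf, List.sum_toFinset _ h.1, h.sum_altSign_mul_edgeDeg]
  rcases lt_or_ge 0 (headExcess A1 v l) with hl | hl
  · obtain ⟨b, t, rfl, hb⟩ := exists_eq_cons_cons_of_headExcess_pos hl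
    exact ⟨b, t, h, rfl, hb⟩
  · obtain ⟨b, t, hrev, hb⟩ := exists_eq_cons_cons_of_headExcess_pos (A := A1) (v := v)
      (l := l.reverse) (by omega)
    refine ⟨b, t, hrev ▸ h.reverse, ?_, hb⟩
    rw [← hrev, edgesOf, trailEdges_reverse, List.toFinset_reverse, edgesOf]

end Degrees

section Merging

variable {A1 A2 : Finset (Sym2 V)}

theorem IsAltTrail.reverse_append {v b b' : V} {t t' : List V}
    (hp : IsAltTrail A1 A2 (v :: b :: t)) (hq : IsAltTrail A1 A2 (v :: b' :: t'))
    (hb : s(v, b) ∈ A1) (hb' : s(v, b') ∈ A2)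
    (hdisj : Disjoint (edgesOf (v :: b :: t)) (edgesOf (v :: b' :: t'))) :
    IsAltTrail A1 A2 ((b :: t).reverse ++ v :: b' :: t') := by
  obtain ⟨hnd, hmem, hch⟩ := hp.reverse
  rw [trailEdges_reverse] at hnd hmem hch
  refine ⟨?_, ?_, ?_⟩ <;> rw [trailEdges_reverse_append]
  · refine List.nodup_append.2 ⟨hnd, hq.1, fun e he f hf hef => ?_⟩
    subst hef
    exact Finset.disjoint_left.1 hdisj (List.mem_toFinset.2 (List.mem_reverse.1 he))
      (List.mem_toFinset.2 hf)
  · intro e he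
    rcases List.mem_append.1 he with he | he
    · exact hmem e he
    · exact hq.2.1 e he
  · refine List.isChain_append.2 ⟨hch, hq.2.2, fun x hx y hy => ?_⟩
    simp only [List.getLast?_reverse, trailEdges_cons_cons, List.head?_cons,
      Option.mem_def, Option.some.injEq] at hx hy
    subst hx hy
    exact ⟨fun _ => hb', fun _ => hb⟩

theorem edgesOf_reverse_append (xs : List V) (v : V) (ys : List V) :
    edgesOf (xs.reverse ++ v :: ys) = edgesOf (v :: xs) ∪ edgesOf (v :: ys) := by
  rw [edgesOf, trailEdges_reverse_append, List.toFinset_append, List.toFinset_reverse]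
  rfl

theorem IsAltTrailPartition.merge {Ps : Finset (List V)} (hPs : IsAltTrailPartition A1 A2 Ps)
    {p q r : List V} (hp : p ∈ Ps) (hq : q ∈ Ps) (hpq : p ≠ q) (hr : IsAltTrail A1 A2 r)
    (hre : edgesOf r = edgesOf p ∪ edgesOf q) :
    IsAltTrailPartition A1 A2 (insert r ((Ps.erase p).erase q)) := by
  obtain ⟨htrails, hdisj, hunion⟩ := hPs
  have hrest {x : List V} (hx : x ∈ (Ps.erase p).erase q) : x ∈ Ps ∧ x ≠ p ∧ x ≠ q := by
    simp only [Finset.mem_erase] at hx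
    exact ⟨hx.2.2, hx.2.1, hx.1⟩
  have hr_disj {x : List V} (hx : x ∈ (Ps.erase p).erase q) :
      Disjoint (edgesOf r) (edgesOf x) := by
    obtain ⟨hx, hxp, hxq⟩ := hrest hx
    rw [hre]
    exact Finset.disjoint_union_left.2 ⟨hdisj p hp x hx hxp.symm, hdisj q hq x hx hxq.symm⟩
  refine ⟨fun x hx => ?_, fun x hx y hy hxy => ?_, ?_⟩
  · rcases Finset.mem_insert.1 hx with rfl | hx
    · refine ⟨hr, fun hnil => ?_⟩
      have hpe : (edgesOf p).Nonempty := by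
        simpa [edgesOf, List.toFinset_nonempty_iff] using (htrails p hp).2
      have hre' : (edgesOf x).Nonempty := hre ▸ hpe.mono Finset.subset_union_left
      simp [edgesOf, hnil] at hre'
    · exact htrails x (hrest hx).1
  · rcases Finset.mem_insert.1 hx with rfl | hx' <;> rcases Finset.mem_insert.1 hy with rfl | hy'
    · exact absurd rfl hxy
    · exact hr_disj hy'
    · exact (hr_disj hx').symm
    · exact hdisj x (hrest hx').1 y (hrest hy').1 hxy
  · rw [← hunion, Finset.biUnion_insert, hre, Finset.union_assoc, ← Finset.biUnion_insert,
      ← Finset.biUnion_insert, Finset.insert_erase (Finset.mem_erase.2 ⟨hpq.symm, hq⟩),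
      Finset.insert_erase hp]

end Merging

theorem Finset.card_insert_erase_erase_lt {β : Type*} [DecidableEq β] {s : Finset β} {a b : β}
    (c : β) (ha : a ∈ s) (hb : b ∈ s) (hab : a ≠ b) :
    (insert c ((s.erase a).erase b)).card < s.card := by
  have hb' : b ∈ s.erase a := Finset.mem_erase.2 ⟨hab.symm, hb⟩
  have htwo := Finset.one_lt_card.2 ⟨a, ha, b, hb, hab⟩
  calc (insert c ((s.erase a).erase b)).card ≤ ((s.erase a).erase b).card + 1 :=
        Finset.card_insert_le _ _
    _ < s.card := by rw [Finset.card_erase_of_mem hb', Finset.card_erase_of_mem ha]; omega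

theorem stmt_4_general (A1 A2 : Finset (Sym2 V))
    (Ps : Finset (List V)) (hPs : IsAltTrailPartition A1 A2 Ps)
    (hmin : ∀ Qs : Finset (List V), IsAltTrailPartition A1 A2 Qs → Ps.card ≤ Qs.card)
    (p : List V) (hp : p ∈ Ps) (v : V)
    (hv : degE (A1 ∩ edgesOf p) v > degE (A2 ∩ edgesOf p) v) :
    ∀ q ∈ Ps, q ≠ p → degE (A1 ∩ edgesOf q) v ≥ degE (A2 ∩ edgesOf q) v := by
  intro q hq hqp
  by_contra! hq_lt
  obtain ⟨b, t, hp', hp'E, hb⟩ := (hPs.1 p hp).1.exists_start_of_degE_lt hv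
  obtain ⟨b', t', hq', hq'E, hb'⟩ := (hPs.1 q hq).1.swap.exists_start_of_degE_lt hq_lt
  have hdisj : Disjoint (edgesOf (v :: b :: t)) (edgesOf (v :: b' :: t')) := by
    rw [hp'E, hq'E]
    exact hPs.2.1 p hp q hq hqp.symm
  have hmerged := hPs.merge hp hq hqp.symm (hp'.reverse_append hq'.swap hb hb' hdisj)
    (by rw [edgesOf_reverse_append, hp'E, hq'E])
  exact (hmin _ hmerged).not_gt (Finset.card_insert_erase_erase_lt _ hp hq hqp.symm)

/-- in a minimum partition into alternating trails, if the trail `p`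
is unbalanced at `v` towards `A1`, then no other trail is unbalanced at `v`
towards `A2`. -/
theorem stmt_4 (E : Finset (Sym2 V)) (A1 A2 : Finset (Sym2 V))
    (h1 : IsTwoMatching E A1) (h2 : IsTwoMatching E A2)
    (Ps : Finset (List V)) (hPs : IsAltTrailPartition A1 A2 Ps)
    (hmin : ∀ Qs : Finset (List V), IsAltTrailPartition A1 A2 Qs → Ps.card ≤ Qs.card)
    (p : List V) (hp : p ∈ Ps) (v : V)
    (hv : degE (A1 ∩ edgesOf p) v > degE (A2 ∩ edgesOf p) v) :
    ∀ q ∈ Ps, q ≠ p → degE (A1 ∩ edgesOf q) v ≥ degE (A2 ∩ edgesOf q) v :=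
  stmt_4_general A1 A2 Ps hPs hmin p hp v hv
end

section
/- Let A1, A2 be 2-matchings in a graph G, P a trail contained in A1 △ A2, and v a vertex with d_{A1∩P}(v) > d_{A2∩P}(v). Then A1 △ P satisfies d_{A1△P}(v) < d_{A1}(v) ≤ 2, i.e., the degree of v strictly decreases when replacing the A1-edges of P by the A2-edges of P. -/
open Finset

variable {V : Type*} [DecidableEq V]

section Exchange

variable {A B P : Finset (Sym2 V)}

lemma degE_union_of_disjoint (h : Disjoint A B) (v : V) :
    degE (A ∪ B) v = degE A v + degE B v :=
  Finset.sum_union h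

lemma degE_eq_degE_sdiff_add_degE_inter (A P : Finset (Sym2 V)) (v : V) :
    degE A v = degE (A \ P) v + degE (A ∩ P) v := by
  rw [← degE_union_of_disjoint (Finset.disjoint_sdiff_inter A P), Finset.sdiff_union_inter]

lemma degE_symmDiffE (A P : Finset (Sym2 V)) (v : V) :
    degE (symmDiffE A P) v = degE (A \ P) v + degE (P \ A) v :=
  degE_union_of_disjoint disjoint_sdiff_sdiff v

lemma inter_eq_sdiff_of_subset_symmDiffE (hP : P ⊆ symmDiffE A B) : B ∩ P = P \ A := by
  ext e
  have he := @hP e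
  simp only [symmDiffE, Finset.mem_union, Finset.mem_sdiff, Finset.mem_inter] at he ⊢
  tauto

lemma degE_symmDiffE_lt_of_subset_symmDiffE (hP : P ⊆ symmDiffE A B) {v : V}
    (hv : degE (B ∩ P) v < degE (A ∩ P) v) : degE (symmDiffE A P) v < degE A v := by
  rw [degE_symmDiffE, degE_eq_degE_sdiff_add_degE_inter A P,
    ← inter_eq_sdiff_of_subset_symmDiffE hP]
  omega

end Exchange

theorem stmt_6_general (E : Finset (Sym2 V)) (A1 A2 : Finset (Sym2 V))
    (h1 : IsTwoMatching E A1)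
    (p : List V)
    (hsub : edgesOf p ⊆ symmDiffE A1 A2)
    (v : V) (hv : degE (A1 ∩ edgesOf p) v > degE (A2 ∩ edgesOf p) v) :
    degE (symmDiffE A1 (edgesOf p)) v < degE A1 v ∧ degE A1 v ≤ 2 :=
  ⟨degE_symmDiffE_lt_of_subset_symmDiffE hsub hv, h1.2 v⟩

/-- if a trail `p ⊆ A1 △ A2` is unbalanced at `v` towards `A1`, then
the degree of `v` strictly decreases in `A1 △ p`. -/
theorem stmt_6 (E : Finset (Sym2 V)) (A1 A2 : Finset (Sym2 V))
    (h1 : IsTwoMatching E A1) (h2 : IsTwoMatching E A2)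
    (p : List V) (hp : (trailEdges p).Nodup)
    (hsub : edgesOf p ⊆ symmDiffE A1 A2)
    (v : V) (hv : degE (A1 ∩ edgesOf p) v > degE (A2 ∩ edgesOf p) v) :
    degE (symmDiffE A1 (edgesOf p)) v < degE A1 v ∧ degE A1 v ≤ 2 :=
  stmt_6_general E A1 A2 h1 p hsub v hv
end

section
/- Let G be a graph without parallel edges, T a set of triangles, A1 and A2 T-free 2-matchings, and suppose a triangle T0 = {u1u2, u2u3, u3u1} ∈ T satisfies u1u2, u3u1, u1'u2, u3u1' ∈ A1 \ A2 and u2u3 ∈ A2 \ A1 for some u1' ≠ u1 with T0' = {u1'u2, u2u3, u3u1'} ∈ T. Assume further that no triangle of T has the configuration of cases 1–3 of the induction (in particular, every triangle of T is contained in A1 ∪ A2, and no triangle of T with one edge in one matching and two in the other admits the excluded local structures). Then every triangle T'' ∈ T sharing an edge with T0 ∪ T0' has its vertex set contained in {u1, u2, u3, u1'}. -/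
/-! The vertices `u1, u2, u3, u1'` span a 4-cycle of the 2-matching `A1`, so none of them has a
further `A1`-neighbour. Let a triangle of `𝒯` share the edge `pq` with `T0 ∪ T0'` and have apex
`r`. If `pr` or `qr` lies in `A1`, then `r` is one of the four vertices. Otherwise both lie in
`A2`, as Case 1 is excluded. If `pq = u2u3`, the triangle then lies in `A2`, against
`𝒯`-freeness. Otherwise `pq = wx` is an `A1`-edge with `x ∈ {u2, u3}`; let `y` be the other end
of `u2u3`. Excluding Case 3' yields a second apex `r'` with `r'w, r'x ∈ A2`, so `x` has the
`A2`-neighbours `y, r, r'`, forcing `y ∈ {r, r'}` and hence `wy ∈ A2`, whereas `wy ∈ A1 \ A2`. -/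

open Finset

variable {V : Type*} [DecidableEq V]

lemma card_filter_mem_le_degE (M : Finset (Sym2 V)) (v : V) : #{e ∈ M | v ∈ e} ≤ degE M v := by
  rw [card_filter, degE]
  gcongr with e
  split_ifs <;> omega

lemma eq_or_eq_of_degE_le_two {M : Finset (Sym2 V)} {v a b c : V} (hM : degE M v ≤ 2)
    (hab : a ≠ b) (ha : s(v, a) ∈ M) (hb : s(v, b) ∈ M) (hc : s(v, c) ∈ M) : c = a ∨ c = b := by
  by_contra! hca
  have hsub : {s(v, a), s(v, b), s(v, c)} ⊆ {e ∈ M | v ∈ e} := by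
    simp [insert_subset_iff, ha, hb, hc]
  have hcard : #{s(v, a), s(v, b), s(v, c)} = 3 :=
    card_eq_three.2 ⟨_, _, _, Sym2.congr_right.not.2 hab, Sym2.congr_right.not.2 hca.1.symm,
      Sym2.congr_right.not.2 hca.2.symm, rfl⟩
  have := card_le_card hsub
  have := card_filter_mem_le_degE M v
  omega

lemma mem_of_square_of_degE_le_two {M : Finset (Sym2 V)} (hM : ∀ v, degE M v ≤ 2)
    {a a' b b' : V} (ha : a ≠ a') (hb : b ≠ b') (hab : s(a, b) ∈ M) (hab' : s(a, b') ∈ M)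
    (ha'b : s(a', b) ∈ M) (ha'b' : s(a', b') ∈ M) :
    ∀ x ∈ ({a, b, b', a'} : Set V), ∀ y, s(x, y) ∈ M → y ∈ ({a, b, b', a'} : Set V) := by
  simp only [Set.mem_insert_iff, Set.mem_singleton_iff]
  rintro x (rfl | rfl | rfl | rfl) y hy
  · have := eq_or_eq_of_degE_le_two (hM x) hb hab hab' hy; tauto
  · have := eq_or_eq_of_degE_le_two (hM x) ha (Sym2.eq_swap ▸ hab) (Sym2.eq_swap ▸ ha'b) hy
    tauto
  · have := eq_or_eq_of_degE_le_two (hM x) ha (Sym2.eq_swap ▸ hab') (Sym2.eq_swap ▸ ha'b') hy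
    tauto
  · have := eq_or_eq_of_degE_le_two (hM x) hb ha'b ha'b' hy; tauto

lemma IsTriangle.ne_of_mem {T : Finset (Sym2 V)} (hT : IsTriangle T) {p q : V}
    (h : s(p, q) ∈ T) : p ≠ q := by
  obtain ⟨a, b, c, hab, hbc, hac, rfl⟩ := hT
  rintro rfl
  simp only [mem_insert, mem_singleton, Sym2.eq_iff] at h
  grind

lemma IsTriangle.exists_eq_of_mem {T : Finset (Sym2 V)} (hT : IsTriangle T) {p q : V}
    (h : s(p, q) ∈ T) : ∃ r, T = {s(p, q), s(q, r), s(r, p)} := by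
  obtain ⟨a, b, c, -, -, -, rfl⟩ := hT
  simp only [mem_insert, mem_singleton, Sym2.eq_iff] at h
  rcases h with (⟨rfl, rfl⟩ | ⟨rfl, rfl⟩) | (⟨rfl, rfl⟩ | ⟨rfl, rfl⟩) | (⟨rfl, rfl⟩ | ⟨rfl, rfl⟩)
    <;> [refine ⟨c, ?_⟩; refine ⟨c, ?_⟩; refine ⟨a, ?_⟩; refine ⟨a, ?_⟩; refine ⟨b, ?_⟩;
      refine ⟨b, ?_⟩]
  all_goals
    ext e
    induction e using Sym2.ind
    simp only [mem_insert, mem_singleton, Sym2.eq_iff] <;> tauto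

lemma IsTriangle.forall_vertex {T : Finset (Sym2 V)} (hT : IsTriangle T) {p q : V}
    (h : s(p, q) ∈ T) {P : V → Prop} (hp : P p) (hq : P q)
    (hr : ∀ r, T = {s(p, q), s(q, r), s(r, p)} → P r) : ∀ e ∈ T, ∀ x ∈ e, P x := by
  obtain ⟨r, rfl⟩ := hT.exists_eq_of_mem h
  have hr := hr r rfl
  simp only [mem_insert, mem_singleton]
  rintro e (rfl | rfl | rfl) x hx <;> rcases Sym2.mem_iff.1 hx with rfl | rfl <;> assumption

/-- The condition excluding Case 3 (and, with `A` and `B` exchanged, Case 3'). -/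
def HasAlternativeApex (𝒯 : Set (Finset (Sym2 V))) (A B : Finset (Sym2 V)) : Prop :=
  ∀ v1 v2 v3 : V, ({s(v1, v2), s(v2, v3), s(v3, v1)} : Finset (Sym2 V)) ∈ 𝒯 →
    s(v1, v2) ∈ A ∧ s(v1, v2) ∉ B → s(v3, v1) ∈ A ∧ s(v3, v1) ∉ B →
    s(v2, v3) ∈ B ∧ s(v2, v3) ∉ A →
    ∃ v1' : V, v1' ≠ v1 ∧ ({s(v1', v2), s(v2, v3), s(v3, v1')} : Finset (Sym2 V)) ∈ 𝒯 ∧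
      s(v1', v2) ∈ A ∧ s(v3, v1') ∈ A

section Apex

variable {𝒯 : Set (Finset (Sym2 V))} {A B : Finset (Sym2 V)}

lemma mem_or_mem_of_tFree (hB : TFree 𝒯 B) {x y c : V}
    (hT : ({s(x, y), s(y, c), s(c, x)} : Finset (Sym2 V)) ∈ 𝒯)
    (hcover : ({s(x, y), s(y, c), s(c, x)} : Finset (Sym2 V)) ⊆ A ∪ B) (hxy : s(x, y) ∈ B) :
    s(x, c) ∈ A ∨ s(y, c) ∈ A := by
  by_contra! h
  have hyc : s(y, c) ∈ B := (mem_union.1 (hcover (by simp))).resolve_left h.2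
  have hcx : s(c, x) ∈ B := (mem_union.1 (hcover (by simp))).resolve_left (Sym2.eq_swap ▸ h.1)
  exact hB _ hT (by simp [insert_subset_iff, hxy, hyc, hcx])

lemma mem_or_mem_of_hasAlternativeApex (hB : HasAlternativeApex 𝒯 B A) {w x y c : V}
    (hx : degE B x ≤ 2) (hxy : s(x, y) ∈ B) (hwy : s(w, y) ∉ B) (hwx : s(w, x) ∈ A ∧ s(w, x) ∉ B)
    (hT : ({s(w, x), s(x, c), s(c, w)} : Finset (Sym2 V)) ∈ 𝒯)
    (hcover : ({s(w, x), s(x, c), s(c, w)} : Finset (Sym2 V)) ⊆ A ∪ B) :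
    s(w, c) ∈ A ∨ s(x, c) ∈ A := by
  by_contra! h
  have hxc : s(x, c) ∈ B := (mem_union.1 (hcover (by simp))).resolve_left h.2
  have hcw : s(c, w) ∈ B := (mem_union.1 (hcover (by simp))).resolve_left (Sym2.eq_swap ▸ h.1)
  have hT' : ({s(c, w), s(w, x), s(x, c)} : Finset (Sym2 V)) ∈ 𝒯 := by
    convert hT using 1
    ext e
    simp only [mem_insert, mem_singleton]
    tauto
  obtain ⟨c', hc', -, hc'w, hxc'⟩ :=
    hB c w x hT' ⟨hcw, Sym2.eq_swap ▸ h.1⟩ ⟨hxc, h.2⟩ hwx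
  rcases eq_or_eq_of_degE_le_two hx hc'.symm hxc hxc' hxy with rfl | rfl
  · exact hwy (Sym2.eq_swap ▸ hcw)
  · exact hwy (Sym2.eq_swap ▸ hc'w)

end Apex

theorem stmt_16_general (E : Finset (Sym2 V))
    (𝒯 : Set (Finset (Sym2 V))) (h𝒯 : ∀ T ∈ 𝒯, IsTriangle T ∧ T ⊆ E)
    (A1 A2 : Finset (Sym2 V))
    (h1 : IsTwoMatching E A1)
    (h2 : IsTwoMatching E A2) (h2t : TFree 𝒯 A2)
    (u1 u2 u3 u1' : V) (hne : u1 ≠ u1')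
    (hT0 : ({s(u1, u2), s(u2, u3), s(u3, u1)} : Finset (Sym2 V)) ∈ 𝒯)
    (h12 : s(u1, u2) ∈ A1 ∧ s(u1, u2) ∉ A2)
    (h31 : s(u3, u1) ∈ A1 ∧ s(u3, u1) ∉ A2)
    (h1'2 : s(u1', u2) ∈ A1 ∧ s(u1', u2) ∉ A2)
    (h31' : s(u3, u1') ∈ A1 ∧ s(u3, u1') ∉ A2)
    (h23 : s(u2, u3) ∈ A2 ∧ s(u2, u3) ∉ A1)
    -- no triangle of `𝒯` has the configuration of Case 1:
    (hCase1 : ∀ T ∈ 𝒯, T ⊆ A1 ∪ A2)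
    -- no triangle of `𝒯` has the configuration of Case 3':
    (hCase3' : ∀ v1 v2 v3 : V,
      ({s(v1, v2), s(v2, v3), s(v3, v1)} : Finset (Sym2 V)) ∈ 𝒯 →
      s(v1, v2) ∈ A2 ∧ s(v1, v2) ∉ A1 → s(v3, v1) ∈ A2 ∧ s(v3, v1) ∉ A1 →
      s(v2, v3) ∈ A1 ∧ s(v2, v3) ∉ A2 →
      ∃ v1' : V, v1' ≠ v1 ∧
        ({s(v1', v2), s(v2, v3), s(v3, v1')} : Finset (Sym2 V)) ∈ 𝒯 ∧
        s(v1', v2) ∈ A2 ∧ s(v3, v1') ∈ A2) :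
    ∀ T ∈ 𝒯,
      (T ∩ (({s(u1, u2), s(u2, u3), s(u3, u1)} : Finset (Sym2 V)) ∪
        {s(u1', u2), s(u2, u3), s(u3, u1')})).Nonempty →
      ∀ e ∈ T, ∀ x ∈ e, x ∈ ({u1, u2, u3, u1'} : Set V) := by
  set S : Set V := {u1, u2, u3, u1'} with hS
  have hu23 : u2 ≠ u3 := (h𝒯 _ hT0).1.ne_of_mem (by simp)
  have hA1_closed : ∀ x ∈ S, ∀ c, s(x, c) ∈ A1 → c ∈ S :=
    mem_of_square_of_degE_le_two h1.2 hne hu23 h12.1 (Sym2.eq_swap ▸ h31.1) h1'2.1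
      (Sym2.eq_swap ▸ h31'.1)
  rintro T hT ⟨f, hf⟩
  have apex_mem : ∀ p ∈ S, ∀ q ∈ S, s(p, q) ∈ T →
      (∀ r, T = {s(p, q), s(q, r), s(r, p)} → s(p, r) ∈ A1 ∨ s(q, r) ∈ A1) →
      ∀ e ∈ T, ∀ v ∈ e, v ∈ S := fun p hp q hq hpq hr =>
    (h𝒯 T hT).1.forall_vertex hpq hp hq fun r hr' =>
      (hr r hr').elim (hA1_closed p hp r) (hA1_closed q hq r)
  have apex_of_A2_edge : s(u2, u3) ∈ T → ∀ e ∈ T, ∀ v ∈ e, v ∈ S := fun h =>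
    apex_mem u2 (by simp [hS]) u3 (by simp [hS]) h fun r hr => by
      subst hr
      exact mem_or_mem_of_tFree h2t hT (hCase1 _ hT) h23.1
  have apex_of_A1_edge : ∀ w ∈ S, ∀ x ∈ S, ∀ y, s(x, y) ∈ A2 → s(w, y) ∉ A2 →
      s(w, x) ∈ A1 ∧ s(w, x) ∉ A2 → s(w, x) ∈ T → ∀ e ∈ T, ∀ v ∈ e, v ∈ S :=
    fun w hw x hx y hxy hwy hwx h => apex_mem w hw x hx h fun r hr => by
      subst hr
      exact mem_or_mem_of_hasAlternativeApex hCase3' (h2.2 x) hxy hwy hwx hT (hCase1 _ hT)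
  simp only [mem_inter, mem_union, mem_insert, mem_singleton] at hf
  obtain ⟨hfT, (rfl | rfl | rfl) | (rfl | rfl | rfl)⟩ := hf
  · exact apex_of_A1_edge u1 (by simp [hS]) u2 (by simp [hS]) u3 h23.1 (Sym2.eq_swap ▸ h31.2)
      h12 hfT
  · exact apex_of_A2_edge hfT
  · exact apex_of_A1_edge u1 (by simp [hS]) u3 (by simp [hS]) u2 (Sym2.eq_swap ▸ h23.1) h12.2
      (Sym2.eq_swap ▸ h31) (Sym2.eq_swap ▸ hfT)
  · exact apex_of_A1_edge u1' (by simp [hS]) u2 (by simp [hS]) u3 h23.1 (Sym2.eq_swap ▸ h31'.2)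
      h1'2 hfT
  · exact apex_of_A2_edge hfT
  · exact apex_of_A1_edge u1' (by simp [hS]) u3 (by simp [hS]) u2 (Sym2.eq_swap ▸ h23.1) h1'2.2
      (Sym2.eq_swap ▸ h31') (Sym2.eq_swap ▸ hfT)

/-- Claim 1 of the paper: in Case 4 of the induction, every
triangle of `𝒯` sharing an edge with `T0 ∪ T0'` has all its vertices in
`{u1, u2, u3, u1'}`. -/
theorem stmt_16 (E : Finset (Sym2 V))
    (𝒯 : Set (Finset (Sym2 V))) (h𝒯 : ∀ T ∈ 𝒯, IsTriangle T ∧ T ⊆ E)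
    (A1 A2 : Finset (Sym2 V))
    (h1 : IsTwoMatching E A1) (h1t : TFree 𝒯 A1)
    (h2 : IsTwoMatching E A2) (h2t : TFree 𝒯 A2)
    (u1 u2 u3 u1' : V) (hne : u1 ≠ u1')
    (hT0 : ({s(u1, u2), s(u2, u3), s(u3, u1)} : Finset (Sym2 V)) ∈ 𝒯)
    (hT0' : ({s(u1', u2), s(u2, u3), s(u3, u1')} : Finset (Sym2 V)) ∈ 𝒯)
    (h12 : s(u1, u2) ∈ A1 ∧ s(u1, u2) ∉ A2)
    (h31 : s(u3, u1) ∈ A1 ∧ s(u3, u1) ∉ A2)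
    (h1'2 : s(u1', u2) ∈ A1 ∧ s(u1', u2) ∉ A2)
    (h31' : s(u3, u1') ∈ A1 ∧ s(u3, u1') ∉ A2)
    (h23 : s(u2, u3) ∈ A2 ∧ s(u2, u3) ∉ A1)
    -- no triangle of `𝒯` has the configuration of Case 1:
    (hCase1 : ∀ T ∈ 𝒯, T ⊆ A1 ∪ A2)
    -- no triangle of `𝒯` has the configuration of Case 2:
    (hCase2 : ¬ ∃ a b c : V, ({s(a, b), s(b, c), s(c, a)} : Finset (Sym2 V)) ∈ 𝒯 ∧
      s(a, b) ∈ A1 ∧ s(a, b) ∉ A2 ∧ s(b, c) ∈ A1 ∧ s(b, c) ∈ A2 ∧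
      s(c, a) ∈ A2 ∧ s(c, a) ∉ A1)
    -- no triangle of `𝒯` has the configuration of Case 3:
    (hCase3 : ∀ v1 v2 v3 : V,
      ({s(v1, v2), s(v2, v3), s(v3, v1)} : Finset (Sym2 V)) ∈ 𝒯 →
      s(v1, v2) ∈ A1 ∧ s(v1, v2) ∉ A2 → s(v3, v1) ∈ A1 ∧ s(v3, v1) ∉ A2 →
      s(v2, v3) ∈ A2 ∧ s(v2, v3) ∉ A1 →
      ∃ v1' : V, v1' ≠ v1 ∧
        ({s(v1', v2), s(v2, v3), s(v3, v1')} : Finset (Sym2 V)) ∈ 𝒯 ∧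
        s(v1', v2) ∈ A1 ∧ s(v3, v1') ∈ A1)
    -- no triangle of `𝒯` has the configuration of Case 3':
    (hCase3' : ∀ v1 v2 v3 : V,
      ({s(v1, v2), s(v2, v3), s(v3, v1)} : Finset (Sym2 V)) ∈ 𝒯 →
      s(v1, v2) ∈ A2 ∧ s(v1, v2) ∉ A1 → s(v3, v1) ∈ A2 ∧ s(v3, v1) ∉ A1 →
      s(v2, v3) ∈ A1 ∧ s(v2, v3) ∉ A2 →
      ∃ v1' : V, v1' ≠ v1 ∧
        ({s(v1', v2), s(v2, v3), s(v3, v1')} : Finset (Sym2 V)) ∈ 𝒯 ∧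
        s(v1', v2) ∈ A2 ∧ s(v3, v1') ∈ A2) :
    ∀ T ∈ 𝒯,
      (T ∩ (({s(u1, u2), s(u2, u3), s(u3, u1)} : Finset (Sym2 V)) ∪
        {s(u1', u2), s(u2, u3), s(u3, u1')})).Nonempty →
      ∀ e ∈ T, ∀ x ∈ e, x ∈ ({u1, u2, u3, u1'} : Set V) :=
  stmt_16_general E 𝒯 h𝒯 A1 A2 h1 h2 h2t u1 u2 u3 u1' hne hT0 h12 h31 h1'2 h31' h23 hCase1 hCase3'
end
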